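/- (Flag PDE solution method, special case) Let A = ℂ[x_1,...,x_n,y_1,...,y_n], T₁ = ∂_{x_1}∂_{y_1} with right inverse T₁⁻ = ∫_{(x_1)}∫_{(y_1)} (formal integration in x_1 and y_1), and T₂ = Σ_{i=2}^n ∂_{x_i}∂_{y_i}. Then for every monomial x^α y^β with α₁β₁ = 0, the series f = Σ_{i=0}^∞ (−T₁⁻ T₂)^i (x^α y^β) is a finite sum and satisfies (T₁ + T₂)(f) = 0; explicitly f = Σ_{i=0}^∞ ((−1)^i x_1^i y_1^i / ∏_{r=1}^i (α₁+r)(β₁+r))·T₂^i(x^α y^β). -/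

import Mathlib

/-! Split `x^α y^β = x₁^a y₁^b g` with `g` free of `x₁, y₁`. Since `T₂` commutes with
multiplication by `x₁, y₁` and with `∂_{x₁}, ∂_{y₁}`, the `i`-th summand is
`c_i x₁^{a+i} y₁^{b+i} T₂^i g`, and `T₁` applied to the `(i+1)`-st summand equals
`c_{i+1} (a+i+1)(b+i+1) x₁^{a+i} y₁^{b+i} T₂^{i+1} g`, which is minus `T₂` of the `i`-th one by
the choice of `c_i`. As `T₁` kills the `0`-th summand (because `ab = 0`) and `T₂` lowers the total
degree, the sum of `(T₁ + T₂)` over the summands telescopes to `0`. -/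

open MvPolynomial

noncomputable section

abbrev PolyA (n : ℕ) := MvPolynomial (Fin n ⊕ Fin n) ℂ

variable (n : ℕ)

def xv (i : Fin n) : PolyA n := X (Sum.inl i)
def yv (i : Fin n) : PolyA n := X (Sum.inr i)
def pdx (i : Fin n) : Module.End ℂ (PolyA n) :=
  (pderiv (Sum.inl i) : Derivation ℂ (PolyA n) (PolyA n)).toLinearMap
def pdy (i : Fin n) : Module.End ℂ (PolyA n) :=
  (pderiv (Sum.inr i) : Derivation ℂ (PolyA n) (PolyA n)).toLinearMap

/-- T₁ = ∂_{x_1}∂_{y_1} -/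
def T1op (hn : 1 ≤ n) : Module.End ℂ (PolyA n) := pdx n ⟨0, hn⟩ ∘ₗ pdy n ⟨0, hn⟩
/-- T₂ = Σ_{i=2}^n ∂_{x_i}∂_{y_i} -/
def T2op (hn : 1 ≤ n) : Module.End ℂ (PolyA n) :=
  ∑ i : Fin n, if i = (⟨0, hn⟩ : Fin n) then 0 else pdx n i ∘ₗ pdy n i

/-- the monomial x^α y^β -/
def monom (α β : Fin n → ℕ) : PolyA n := (∏ i, xv n i ^ α i) * ∏ i, yv n i ^ β i



namespace MvPolynomial

variable {R σ : Type*} [CommSemiring R]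

theorem pderiv_pderiv_comm (i j : σ) (p : MvPolynomial σ R) :
    pderiv i (pderiv j p) = pderiv j (pderiv i p) := by
  classical
  induction p using MvPolynomial.induction_on' with
  | monomial s a =>
    rcases eq_or_ne i j with rfl | hij
    · rfl
    simp only [pderiv_monomial, Finsupp.tsub_apply, Finsupp.single_eq_of_ne' hij.symm,
      Finsupp.single_eq_of_ne' hij, tsub_zero, tsub_tsub, add_comm (Finsupp.single j 1),
      mul_right_comm]
  | add p q hp hq => simp [hp, hq]

theorem totalDegree_pderiv_le (i : σ) (p : MvPolynomial σ R) :
    (pderiv i p).totalDegree ≤ p.totalDegree - 1 := by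
  classical
  refine Finset.sup_le fun m hm => ?_
  rw [mem_support_iff, coeff_pderiv] at hm
  have h := le_totalDegree (mem_support_iff.mpr (left_ne_zero_of_mul hm))
  rw [Finsupp.sum_add_index' (fun _ => rfl) (fun _ _ _ => rfl), Finsupp.sum_single_index rfl] at h
  omega

theorem pderiv_eq_zero_of_totalDegree_eq_zero {i : σ} {p : MvPolynomial σ R}
    (h : p.totalDegree = 0) : pderiv i p = 0 := by
  rw [totalDegree_eq_zero_iff_eq_C.mp h, pderiv_C]

end MvPolynomial

theorem Derivation.map_mul_of_map_eq_zero_left {R A : Type*} [CommSemiring R] [CommSemiring A]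
    [Algebra R A] (D : Derivation R A A) {q : A} (hq : D q = 0) (p : A) :
    D (q * p) = q * D p := by
  simp [D.leibniz, hq]

theorem Derivation.map_prod_eq_zero {R A ι : Type*} [CommSemiring R] [CommSemiring A]
    [Algebra R A] (D : Derivation R A A) {s : Finset ι} {f : ι → A}
    (hf : ∀ i ∈ s, D (f i) = 0) : D (∏ i ∈ s, f i) = 0 :=
  Finset.prod_induction f (fun p => D p = 0) (fun a b ha hb => by simp [D.leibniz, ha, hb])
    D.map_one_eq_zero hf

theorem LinearMap.add_apply_finsum_eq_zero {R M : Type*} [Semiring R] [AddCommGroup M]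
    [Module R M] (S T : M →ₗ[R] M) (u : ℕ → M) (N : ℕ) (h0 : S (u 0) = 0)
    (hsucc : ∀ i, S (u (i + 1)) = -T (u i)) (hN : ∀ i ≥ N, u i = 0) :
    (S + T) (∑ᶠ i, u i) = 0 := by
  have hsupp : Function.support u ⊆ Finset.range N := fun i hi => by
    by_contra h; simp_all
  rw [finsum_eq_sum_of_support_subset u hsupp, map_sum]
  have hterm : ∀ i, (S + T) (u i) = S (u i) - S (u (i + 1)) := fun i => by
    rw [hsucc, sub_neg_eq_add, LinearMap.add_apply]
  simp only [hterm]
  rw [Finset.sum_range_sub', h0, hN N le_rfl, map_zero, sub_zero]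

def flagCoeff (K : Type*) [Field K] (a b i : ℕ) : K :=
  (-1) ^ i / ∏ r ∈ Finset.Icc 1 i, ((a + r) * (b + r) : K)

theorem flagCoeff_succ_mul {K : Type*} [Field K] [CharZero K] (a b i : ℕ) :
    flagCoeff K a b (i + 1) * (((a + (i + 1)) * (b + (i + 1)) : ℕ) : K) = -flagCoeff K a b i := by
  have hq : ((a + (i + 1)) * (b + (i + 1)) : K) ≠ 0 := by
    exact_mod_cast (by positivity : (a + (i + 1)) * (b + (i + 1)) ≠ 0)
  rw [flagCoeff, flagCoeff, Finset.prod_Icc_succ_top (by omega), pow_succ]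
  push_cast
  rw [div_mul_eq_mul_div, mul_div_mul_right _ _ hq, mul_neg_one, neg_div]

section FirstVariables

variable {n} (hn : 1 ≤ n)

def IndepX₁Y₁ (p : PolyA n) : Prop :=
  pderiv (Sum.inl ⟨0, hn⟩) p = 0 ∧ pderiv (Sum.inr ⟨0, hn⟩) p = 0

theorem commute_T2op_pderiv (v : Fin n ⊕ Fin n) :
    Commute (T2op n hn) (pderiv v : Derivation ℂ (PolyA n) (PolyA n)).toLinearMap := by
  refine Commute.sum_left _ _ _ fun i _ => ?_
  split_ifs
  · exact Commute.zero_left _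
  · refine LinearMap.ext fun p => ?_
    simp only [Module.End.mul_apply, LinearMap.comp_apply, pdx, pdy, Derivation.coeFn_coe,
      pderiv_pderiv_comm v]

variable {hn}

theorem IndepX₁Y₁.T2op_pow {g : PolyA n} (hg : IndepX₁Y₁ hn g) (j : ℕ) :
    IndepX₁Y₁ hn ((T2op n hn ^ j) g) := by
  have hcomm : ∀ v, pderiv v ((T2op n hn ^ j) g) = (T2op n hn ^ j) (pderiv v g) := fun v =>
    LinearMap.congr_fun ((commute_T2op_pderiv hn v).pow_left j).symm.eq g
  exact ⟨by rw [hcomm, hg.1, map_zero], by rw [hcomm, hg.2, map_zero]⟩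

theorem T2op_mul_left {q : PolyA n}
    (hq : ∀ i ≠ (⟨0, hn⟩ : Fin n), pderiv (Sum.inl i) q = 0 ∧ pderiv (Sum.inr i) q = 0)
    (p : PolyA n) : T2op n hn (q * p) = q * T2op n hn p := by
  simp only [T2op, LinearMap.sum_apply, Finset.mul_sum]
  refine Finset.sum_congr rfl fun i _ => ?_
  split_ifs with hi
  · simp
  · simp [pdx, pdy, Derivation.map_mul_of_map_eq_zero_left _ (hq i hi).1,
      Derivation.map_mul_of_map_eq_zero_left _ (hq i hi).2]

theorem T2op_xv_pow_mul_yv_pow_mul (k l : ℕ) (p : PolyA n) :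
    T2op n hn (xv n ⟨0, hn⟩ ^ k * yv n ⟨0, hn⟩ ^ l * p)
      = xv n ⟨0, hn⟩ ^ k * yv n ⟨0, hn⟩ ^ l * T2op n hn p :=
  T2op_mul_left (fun i hi => by simp [xv, yv, pderiv_X, Ne.symm hi]) p

theorem T2op_pow_xv_pow_mul_yv_pow_mul (j k l : ℕ) (p : PolyA n) :
    (T2op n hn ^ j) (xv n ⟨0, hn⟩ ^ k * yv n ⟨0, hn⟩ ^ l * p)
      = xv n ⟨0, hn⟩ ^ k * yv n ⟨0, hn⟩ ^ l * (T2op n hn ^ j) p := by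
  induction j generalizing p with
  | zero => simp
  | succ j ih =>
    rw [pow_succ, Module.End.mul_apply, Module.End.mul_apply, T2op_xv_pow_mul_yv_pow_mul, ih]

theorem totalDegree_T2op_le (p : PolyA n) : (T2op n hn p).totalDegree ≤ p.totalDegree - 1 := by
  simp only [T2op, LinearMap.sum_apply]
  refine totalDegree_finsetSum_le fun i _ => ?_
  split_ifs
  · simp
  · have h₁ := totalDegree_pderiv_le (Sum.inl i) (pderiv (Sum.inr i) p)
    have h₂ := totalDegree_pderiv_le (Sum.inr i) p
    simp only [LinearMap.comp_apply, pdx, pdy, Derivation.coeFn_coe]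
    omega

theorem T2op_apply_eq_zero_of_totalDegree_eq_zero {p : PolyA n} (h : p.totalDegree = 0) :
    T2op n hn p = 0 := by
  simp only [T2op, LinearMap.sum_apply]
  refine Finset.sum_eq_zero fun i _ => ?_
  split_ifs
  · simp
  · simp [pdx, pdy, pderiv_eq_zero_of_totalDegree_eq_zero h]

theorem T2op_pow_apply_eq_zero {p : PolyA n} {j : ℕ} (h : p.totalDegree < j) :
    (T2op n hn ^ j) p = 0 := by
  induction j generalizing p with
  | zero => omega
  | succ j ih =>
    rw [pow_succ, Module.End.mul_apply]
    by_cases hp : p.totalDegree = 0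
    · rw [T2op_apply_eq_zero_of_totalDegree_eq_zero hp, map_zero]
    · exact ih (by have := totalDegree_T2op_le (hn := hn) p; omega)

-- `k - 1` and `l - 1` truncate at `0`, where the coefficient `k * l` vanishes anyway.
theorem T1op_xv_pow_mul_yv_pow_mul {g : PolyA n} (hg : IndepX₁Y₁ hn g) (k l : ℕ) :
    T1op n hn (xv n ⟨0, hn⟩ ^ k * yv n ⟨0, hn⟩ ^ l * g)
      = ((k * l : ℕ) : ℂ) • (xv n ⟨0, hn⟩ ^ (k - 1) * yv n ⟨0, hn⟩ ^ (l - 1) * g) := by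
  simp only [T1op, pdx, pdy, xv, yv, LinearMap.coe_comp, Derivation.coeFn_coe, Function.comp_apply,
    Derivation.leibniz, hg.2, smul_eq_mul, mul_zero, Derivation.leibniz_pow, pderiv_X,
    Pi.single_eq_same, mul_one, nsmul_eq_mul, ne_eq, reduceCtorEq, not_false_eq_true,
    Pi.single_eq_of_ne, add_zero, zero_add, Derivation.map_natCast, hg.1, Nat.cast_mul]
  rw [← Nat.cast_mul, Nat.cast_smul_eq_nsmul, nsmul_eq_mul]
  push_cast
  ring

variable (hn) in
theorem monom_eq_xv_pow_mul_yv_pow_mul (α β : Fin n → ℕ) :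
    ∃ g, IndepX₁Y₁ hn g ∧ monom n α β = xv n ⟨0, hn⟩ ^ α ⟨0, hn⟩ * yv n ⟨0, hn⟩ ^ β ⟨0, hn⟩ * g := by
  refine ⟨(∏ i ∈ Finset.univ.erase ⟨0, hn⟩, xv n i ^ α i) *
    ∏ i ∈ Finset.univ.erase ⟨0, hn⟩, yv n i ^ β i, ?_, ?_⟩
  · constructor <;>
    · rw [Derivation.leibniz, Derivation.map_prod_eq_zero, Derivation.map_prod_eq_zero] <;>
        simp +contextual [xv, yv, pderiv_X]
  · rw [monom, ← Finset.mul_prod_erase _ _ (Finset.mem_univ _),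
      ← Finset.mul_prod_erase _ (fun i => yv n i ^ β i) (Finset.mem_univ _)]
    ring

variable (hn) in
def flagTerm (a b : ℕ) (g : PolyA n) (i : ℕ) : PolyA n :=
  xv n ⟨0, hn⟩ ^ (a + i) * yv n ⟨0, hn⟩ ^ (b + i) * (T2op n hn ^ i) g

variable {a b : ℕ} {g : PolyA n}

theorem T1op_flagTerm_zero (hg : IndepX₁Y₁ hn g) (hab : a * b = 0) :
    T1op n hn (flagTerm hn a b g 0) = 0 := by
  rw [flagTerm, T1op_xv_pow_mul_yv_pow_mul (hg.T2op_pow 0), Nat.add_zero, Nat.add_zero, hab,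
    Nat.cast_zero, zero_smul]

theorem T1op_flagTerm_succ (hg : IndepX₁Y₁ hn g) (i : ℕ) :
    T1op n hn (flagTerm hn a b g (i + 1))
      = (((a + (i + 1)) * (b + (i + 1)) : ℕ) : ℂ) • T2op n hn (flagTerm hn a b g i) := by
  rw [flagTerm, flagTerm, T1op_xv_pow_mul_yv_pow_mul (hg.T2op_pow _), T2op_xv_pow_mul_yv_pow_mul,
    ← Module.End.mul_apply, ← pow_succ', Nat.add_succ_sub_one, Nat.add_succ_sub_one]

theorem flagTerm_eq_zero {i : ℕ} (h : g.totalDegree < i) : flagTerm hn a b g i = 0 := by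
  rw [flagTerm, T2op_pow_apply_eq_zero h, mul_zero]

theorem T1op_add_T2op_finsum_flagTerm (hg : IndepX₁Y₁ hn g) (hab : a * b = 0) :
    (T1op n hn + T2op n hn) (∑ᶠ i, flagCoeff ℂ a b i • flagTerm hn a b g i) = 0 :=
  LinearMap.add_apply_finsum_eq_zero _ _ _ (g.totalDegree + 1)
    (by rw [map_smul, T1op_flagTerm_zero hg hab, smul_zero])
    (fun i => by
      rw [map_smul, map_smul, T1op_flagTerm_succ hg, smul_smul, flagCoeff_succ_mul, neg_smul])
    (fun i hi => by rw [flagTerm_eq_zero (by omega), smul_zero])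

end FirstVariables

/-- For α₁β₁ = 0, the (finite) series
f = Σ_i ((−1)^i x₁^i y₁^i / ∏_{r=1}^i (α₁+r)(β₁+r))·T₂^i(x^α y^β)
satisfies (T₁+T₂)(f) = 0. -/
theorem flag_pde_solution (hn : 1 ≤ n) (α β : Fin n → ℕ)
    (h0 : α ⟨0, hn⟩ * β ⟨0, hn⟩ = 0) :
    (T1op n hn + T2op n hn)
      (∑ᶠ i : ℕ,
        (((-1 : ℂ) ^ i / ∏ r ∈ Finset.Icc 1 i, ((α ⟨0, hn⟩ + r) * (β ⟨0, hn⟩ + r) : ℂ))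
          • (xv n ⟨0, hn⟩ ^ i * yv n ⟨0, hn⟩ ^ i * (T2op n hn ^ i) (monom n α β)))) = 0 := by
  obtain ⟨g, hg, hm⟩ := monom_eq_xv_pow_mul_yv_pow_mul hn α β
  have hterm : ∀ i, xv n ⟨0, hn⟩ ^ i * yv n ⟨0, hn⟩ ^ i * (T2op n hn ^ i) (monom n α β)
      = flagTerm hn (α ⟨0, hn⟩) (β ⟨0, hn⟩) g i := fun i => by
    rw [hm, T2op_pow_xv_pow_mul_yv_pow_mul, flagTerm]
    ring
  simp only [hterm]
  exact T1op_add_T2op_finsum_flagTerm hg h0
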